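/- Let g ≥ 1 and let n ≥ g be an integer with n ≡ g (mod 2); set m = (n − g)/2 and let b₀(n) = det( c_{g+i+j−2} )_{1 ≤ i,j ≤ m} (the determinant of the empty matrix being 1). Then, as rational numbers, b₀(n) = (σ_{n,g}/σ_{g,g}) · ( ∏_{k=1}^{g} (2k − 1) ) / ( ∏_{k=1}^{g} (n − g + 2k − 1) ). -/

import Mathlib

/-!
The Hankel determinants `H(g, m) = det (c_{g+i+j})_{i,j<m}` satisfy Dodgson condensation
`H(g, m+2) H(g+2, m) = H(g, m+1) H(g+2, m+1) - H(g+1, m+1)²`, which determines them from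
`H(g, 0) = 1` and `H(g, 1) = c_g` as long as they do not vanish. The classical product
`∏_{1 ≤ i ≤ j < g} (i+j+2m)/(i+j)` is positive and satisfies the same recurrence with the same
initial values, so it equals `H(g, m)`. Finally, when `m` increases by one, this product and
`σ_{g+2m,g}/σ_{g,g} · ∏_k (2k-1) / ∏_k (2m+2k-1)` get multiplied by the same factor.
-/

/-- Cantor's quantity `σ_{n,g}`: the product `binom(n+1,3)·binom(n+3,7)⋯
binom(n+g−1,2g−1)` when `g` is even, and `binom(n,1)·binom(n+2,5)⋯
binom(n+g−1,2g−1)` when `g` is odd. -/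
def sigmaNG (n g : ℕ) : ℕ :=
  if Even g then
    ∏ k ∈ Finset.Icc 1 (g / 2), Nat.choose (n + 2 * k - 1) (4 * k - 1)
  else
    ∏ k ∈ Finset.Icc 1 ((g + 1) / 2), Nat.choose (n + 2 * k - 2) (4 * k - 3)

open Finset

noncomputable def Fin.interiorSumEndsEquiv (k : ℕ) : Fin k ⊕ Fin 2 ≃ Fin (k + 2) :=
  Equiv.ofBijective (Sum.elim (Fin.succ ∘ Fin.castSucc) ![0, Fin.last (k + 1)]) <|
    (Fintype.bijective_iff_injective_and_card _).mpr ⟨by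
      rintro (i | ⟨_ | _ | _, hi⟩) (j | ⟨_ | _ | _, hj⟩) h <;>
        simp_all [Fin.ext_iff] <;> omega,
      by simp⟩

noncomputable def Fin.succSumZeroEquiv (k : ℕ) : Fin k ⊕ Fin 1 ≃ Fin (k + 1) :=
  Equiv.ofBijective (Sum.elim Fin.succ fun _ => 0) <|
    (Fintype.bijective_iff_injective_and_card _).mpr ⟨by
      rintro (i | ⟨_ | _, hi⟩) (j | ⟨_ | _, hj⟩) h <;> simp_all [Fin.ext_iff] <;> omega,
      by simp⟩

namespace Matrix

variable {R : Type*} [CommRing R]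

/-- Both reindexings differ from `P.submatrix f f`, `Q.submatrix f f` by the same permutation,
whose sign squares to `1`. -/
theorem det_submatrix_mul_det_submatrix {l m : Type*} [Fintype l] [DecidableEq l] [Fintype m]
    [DecidableEq m] (P Q : Matrix m m R) (f f' : l ≃ m) :
    (P.submatrix f f').det * (Q.submatrix f' f).det = P.det * Q.det := by
  set σ : Equiv.Perm m := f.symm.trans f'
  have hf' : ⇑f' = σ ∘ f := by ext i; simp [σ]
  have hsign : ((Equiv.Perm.sign σ : ℤ) : R) * (Equiv.Perm.sign σ : ℤ) = 1 := by
    rw [← Int.cast_mul, ← Units.val_mul, Int.units_mul_self, Units.val_one, Int.cast_one]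
  rw [hf']
  change (P.submatrix (id ∘ f) (σ ∘ f)).det * (Q.submatrix (σ ∘ f) (id ∘ f)).det = _
  rw [← submatrix_submatrix, ← submatrix_submatrix, det_submatrix_equiv_self,
    det_submatrix_equiv_self, det_permute, det_permute', mul_mul_mul_comm, hsign, one_mul]

variable {n : Type*} [Fintype n] [DecidableEq n] {k : ℕ}

def borderedMinor (N : Matrix (n ⊕ Fin 2) (n ⊕ Fin 2) R) (a b : Fin 2) :
    Matrix (n ⊕ Fin 1) (n ⊕ Fin 1) R :=
  N.submatrix (Sum.map id fun _ => a) (Sum.map id fun _ => b)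

/-- The Desnanot–Jacobi identity: both sides are computed from the `2 × 2` Schur complement of
the invertible block. -/
theorem det_mul_det_toBlocks₁₁ (N : Matrix (n ⊕ Fin 2) (n ⊕ Fin 2) R)
    (h : IsUnit N.toBlocks₁₁.det) :
    N.det * N.toBlocks₁₁.det =
      (borderedMinor N 0 0).det * (borderedMinor N 1 1).det -
        (borderedMinor N 0 1).det * (borderedMinor N 1 0).det := by
  let := N.toBlocks₁₁.invertibleOfIsUnitDet h
  set S := N.toBlocks₂₂ - N.toBlocks₂₁ * ⅟N.toBlocks₁₁ * N.toBlocks₁₂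
  have hN : N.det = N.toBlocks₁₁.det * S.det := by
    conv_lhs => rw [← fromBlocks_toBlocks N]
    exact det_fromBlocks₁₁ _ _ _ _
  have hminor (a b : Fin 2) : (borderedMinor N a b).det = N.toBlocks₁₁.det * S a b := by
    have : borderedMinor N a b = fromBlocks N.toBlocks₁₁ (of fun i _ => N.toBlocks₁₂ i b)
        (of fun _ j => N.toBlocks₂₁ a j) (of fun _ _ => N.toBlocks₂₂ a b) := by
      ext (i | i) (j | j) <;> rfl
    rw [this, det_fromBlocks₁₁, det_fin_one]
    simp [S, mul_apply]
  rw [hN, hminor, hminor, hminor, hminor, det_fin_two]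
  ring

theorem det_mul_det_submatrix_castSucc_succ (A : Matrix (Fin (k + 2)) (Fin (k + 2)) R)
    (h : IsUnit (A.submatrix (Fin.succ ∘ Fin.castSucc) (Fin.succ ∘ Fin.castSucc)).det) :
    A.det * (A.submatrix (Fin.succ ∘ Fin.castSucc) (Fin.succ ∘ Fin.castSucc)).det =
      (A.submatrix Fin.castSucc Fin.castSucc).det * (A.submatrix Fin.succ Fin.succ).det -
        (A.submatrix Fin.castSucc Fin.succ).det * (A.submatrix Fin.succ Fin.castSucc).det := by
  set N := A.submatrix (Fin.interiorSumEndsEquiv k) (Fin.interiorSumEndsEquiv k)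
  have hfirst : Fin.castSucc ∘ Fin.succSumZeroEquiv k =
      Fin.interiorSumEndsEquiv k ∘ Sum.map id fun _ => 0 := by
    ext (i | i) <;> simp [Fin.succSumZeroEquiv, Fin.interiorSumEndsEquiv]
  have hlast : Fin.succ ∘ finSumFinEquiv =
      Fin.interiorSumEndsEquiv k ∘ Sum.map id fun _ => 1 := by
    ext (i | i) <;> simp [Fin.interiorSumEndsEquiv]
  have key := det_mul_det_toBlocks₁₁ N h
  rw [← det_submatrix_equiv_self (Fin.interiorSumEndsEquiv k) A,
    ← det_submatrix_equiv_self (Fin.succSumZeroEquiv k) (A.submatrix Fin.castSucc Fin.castSucc),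
    ← det_submatrix_equiv_self finSumFinEquiv (A.submatrix Fin.succ Fin.succ),
    ← det_submatrix_mul_det_submatrix _ _ (Fin.succSumZeroEquiv k) finSumFinEquiv]
  simp only [submatrix_submatrix, hfirst, hlast]
  exact key

end Matrix

open Nat

theorem cast_factorial_succ (x : ℕ) : ((x + 1)! : ℚ) = ((x : ℚ) + 1) * (x ! : ℚ) := by
  push_cast [Nat.factorial_succ]; ring

def hankelDegreeRatio (h m : ℕ) : ℚ :=
  ((2 * h + 2 * m)! : ℚ) * (h ! : ℚ) / (((2 * h)! : ℚ) * ((h + 2 * m)! : ℚ))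

def hankelSizeRatio (g m : ℕ) : ℚ :=
  ((2 * g + 2 * m)! : ℚ) * ((2 * m + 1)! : ℚ) /
    (((g + 2 * m)! : ℚ) * ((g + 2 * m + 1)! : ℚ))

/-- Since `hankelDegreeRatio h m = ∏_{i=1}^{h} (h+i+2m)/(h+i)`, this is the classical product
`∏_{1 ≤ i ≤ j < g} (i+j+2m)/(i+j)`. -/
def hankelClosedForm (g m : ℕ) : ℚ := ∏ h ∈ range g, hankelDegreeRatio h m

theorem hankelClosedForm_pos (g m : ℕ) : 0 < hankelClosedForm g m :=
  prod_pos fun _ _ => by unfold hankelDegreeRatio; positivity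

theorem hankelClosedForm_zero_right (g : ℕ) : hankelClosedForm g 0 = 1 :=
  prod_eq_one fun h _ => by
    simp only [hankelDegreeRatio, mul_zero, add_zero]
    exact div_self (by positivity)

theorem cast_catalan_eq_factorial_div (g : ℕ) :
    (catalan g : ℚ) = ((2 * g)! : ℚ) / ((g ! : ℚ) * ((g + 1)! : ℚ)) := by
  have h := congrArg (Nat.cast : ℕ → ℚ) (succ_mul_catalan_eq_centralBinom g)
  rw [centralBinom, Nat.cast_choose ℚ (by omega : g ≤ 2 * g),
    show 2 * g - g = g by omega] at h
  rw [cast_factorial_succ, eq_div_iff (by positivity)]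
  rw [eq_div_iff (by positivity)] at h
  push_cast at h
  linear_combination h

theorem hankelClosedForm_one_right (g : ℕ) : hankelClosedForm g 1 = catalan g := by
  induction g with
  | zero => simp [hankelClosedForm]
  | succ g ih =>
    rw [hankelClosedForm, prod_range_succ, ← hankelClosedForm, ih,
      cast_catalan_eq_factorial_div, cast_catalan_eq_factorial_div, hankelDegreeRatio,
      show 2 * g + 2 * 1 = 2 * g + 1 + 1 by ring, show g + 2 * 1 = g + 1 + 1 by ring,
      show 2 * (g + 1) = 2 * g + 1 + 1 by ring]
    simp only [cast_factorial_succ]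
    field_simp

theorem hankelDegreeRatio_mul_hankelSizeRatio (g m : ℕ) :
    hankelSizeRatio g m * hankelDegreeRatio g (m + 1) =
      hankelDegreeRatio g m * hankelSizeRatio (g + 1) m := by
  unfold hankelSizeRatio hankelDegreeRatio
  rw [show 2 * g + 2 * (m + 1) = 2 * g + 2 * m + 2 by ring,
    show g + 2 * (m + 1) = g + 2 * m + 2 by ring,
    show 2 * (g + 1) + 2 * m = 2 * g + 2 * m + 2 by ring,
    show g + 1 + 2 * m = g + 2 * m + 1 by ring]
  ring

theorem hankelClosedForm_succ_right (g m : ℕ) :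
    hankelClosedForm g (m + 1) = hankelClosedForm g m * hankelSizeRatio g m := by
  induction g with
  | zero =>
    simp only [hankelClosedForm, range_zero, prod_empty, one_mul, hankelSizeRatio, mul_zero,
      zero_add]
    rw [div_self (by positivity)]
  | succ g ih =>
    simp only [hankelClosedForm, prod_range_succ] at ih ⊢
    rw [ih, mul_assoc, hankelDegreeRatio_mul_hankelSizeRatio, mul_assoc]

theorem hankelClosedForm_succ_left (g m : ℕ) :
    hankelClosedForm (g + 1) m = hankelClosedForm g m * hankelDegreeRatio g m :=
  prod_range_succ _ _

theorem hankelSizeRatio_mul_hankelDegreeRatio_mul_hankelDegreeRatio (g m : ℕ) :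
    hankelSizeRatio g (m + 1) * hankelDegreeRatio g m * hankelDegreeRatio (g + 1) m =
      hankelSizeRatio g m * hankelDegreeRatio g (m + 1) *
        (hankelDegreeRatio (g + 1) (m + 1) - hankelDegreeRatio g (m + 1)) := by
  unfold hankelSizeRatio hankelDegreeRatio
  rw [show 2 * (g + 1) + 2 * (m + 1) = 2 * g + 2 * m + 1 + 1 + 1 + 1 by ring,
    show g + 1 + 2 * (m + 1) = g + 2 * m + 1 + 1 + 1 by ring,
    show g + 2 * (m + 1) + 1 = g + 2 * m + 1 + 1 + 1 by ring,
    show 2 * g + 2 * (m + 1) = 2 * g + 2 * m + 1 + 1 by ring,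
    show g + 2 * (m + 1) = g + 2 * m + 1 + 1 by ring,
    show 2 * (m + 1) + 1 = 2 * m + 1 + 1 + 1 by ring,
    show 2 * (g + 1) + 2 * m = 2 * g + 2 * m + 1 + 1 by ring,
    show 2 * (g + 1) = 2 * g + 1 + 1 by ring,
    show g + 1 + 2 * m = g + 2 * m + 1 by ring]
  simp only [cast_factorial_succ]
  push_cast
  field_simp
  ring

theorem hankelClosedForm_condensation (g m : ℕ) :
    hankelClosedForm g (m + 2) * hankelClosedForm (g + 2) m =
      hankelClosedForm g (m + 1) * hankelClosedForm (g + 2) (m + 1) -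
        hankelClosedForm (g + 1) (m + 1) ^ 2 := by
  simp only [hankelClosedForm_succ_left, hankelClosedForm_succ_right]
  linear_combination (hankelClosedForm g m ^ 2 * hankelSizeRatio g m) *
    hankelSizeRatio_mul_hankelDegreeRatio_mul_hankelDegreeRatio g m

def catalanHankel (g m : ℕ) : Matrix (Fin m) (Fin m) ℚ :=
  Matrix.of fun i j => (catalan (g + i + j) : ℚ)

theorem catalanHankel_submatrix {g m n : ℕ} (a b : ℕ) {r c : Fin m → Fin n}
    (hr : ∀ i, (r i : ℕ) = i + a) (hc : ∀ j, (c j : ℕ) = j + b) :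
    (catalanHankel g n).submatrix r c = catalanHankel (g + a + b) m := by
  ext i j
  simp only [catalanHankel, Matrix.submatrix_apply, Matrix.of_apply, hr, hc]
  congr 2
  ring

theorem det_catalanHankel_condensation (g k : ℕ) (h : (catalanHankel (g + 2) k).det ≠ 0) :
    (catalanHankel g (k + 2)).det * (catalanHankel (g + 2) k).det =
      (catalanHankel g (k + 1)).det * (catalanHankel (g + 2) (k + 1)).det -
        (catalanHankel (g + 1) (k + 1)).det ^ 2 := by
  have hinner := catalanHankel_submatrix (g := g) (m := k) (r := Fin.succ ∘ Fin.castSucc)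
    (c := Fin.succ ∘ Fin.castSucc) 1 1 (fun _ => rfl) (fun _ => rfl)
  have hfirst := catalanHankel_submatrix (g := g) (r := Fin.castSucc (n := k + 1))
    (c := Fin.castSucc) 0 0 (fun _ => rfl) (fun _ => rfl)
  have hlast := catalanHankel_submatrix (g := g) (r := Fin.succ (n := k + 1))
    (c := Fin.succ) 1 1 (fun _ => rfl) (fun _ => rfl)
  have hfl := catalanHankel_submatrix (g := g) (r := Fin.castSucc (n := k + 1))
    (c := Fin.succ) 0 1 (fun _ => rfl) (fun _ => rfl)
  have hlf := catalanHankel_submatrix (g := g) (r := Fin.succ (n := k + 1))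
    (c := Fin.castSucc) 1 0 (fun _ => rfl) (fun _ => rfl)
  have := Matrix.det_mul_det_submatrix_castSucc_succ (catalanHankel g (k + 2))
    (by rw [hinner]; exact isUnit_iff_ne_zero.mpr h)
  rw [hinner, hfirst, hlast, hfl, hlf] at this
  simpa [sq] using this

theorem det_catalanHankel (g m : ℕ) : (catalanHankel g m).det = hankelClosedForm g m := by
  induction m using Nat.strong_induction_on generalizing g with
  | _ m ih =>
    match m with
    | 0 => rw [Matrix.det_fin_zero, hankelClosedForm_zero_right]
    | 1 => simp [catalanHankel, hankelClosedForm_one_right]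
    | k + 2 =>
      have hk : (catalanHankel (g + 2) k).det = hankelClosedForm (g + 2) k := ih k (by omega) _
      have hne : (catalanHankel (g + 2) k).det ≠ 0 := hk ▸ (hankelClosedForm_pos _ _).ne'
      have key := det_catalanHankel_condensation g k hne
      rw [hk, ih (k + 1) (by omega), ih (k + 1) (by omega), ih (k + 1) (by omega),
        ← hankelClosedForm_condensation] at key
      exact mul_right_cancel₀ (hankelClosedForm_pos _ _).ne' key

theorem sigmaNG_add_two (n g : ℕ) :
    sigmaNG n (g + 2) = sigmaNG n g * (n + g + 1).choose (2 * g + 3) := by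
  rcases Nat.even_or_odd g with ⟨t, rfl⟩ | ⟨t, rfl⟩
  · rw [sigmaNG, sigmaNG, if_pos ⟨t + 1, by ring⟩, if_pos ⟨t, rfl⟩,
      show (t + t + 2) / 2 = t + 1 by omega, show (t + t) / 2 = t by omega,
      prod_Icc_succ_top (by omega)]
    congr 2 <;> omega
  · rw [sigmaNG, sigmaNG, if_neg (by rw [Nat.even_iff]; omega),
      if_neg (by rw [Nat.even_iff]; omega),
      show (2 * t + 1 + 2 + 1) / 2 = t + 1 + 1 by omega, show (2 * t + 1 + 1) / 2 = t + 1 by omega,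
      prod_Icc_succ_top (by omega)]
    congr 2; omega

theorem sigmaNG_pos {n g : ℕ} (h : g ≤ n) : 0 < sigmaNG n g := by
  unfold sigmaNG
  split_ifs <;> exact prod_pos fun k hk => Nat.choose_pos (by rw [mem_Icc] at hk; omega)

theorem choose_mul_factorial_mul_factorial_add_two {n g : ℕ} (h : g + 2 ≤ n) :
    (n + g + 3).choose (2 * g + 3) * ((n + g + 1)! * (n - g)!) =
      (n + g + 1).choose (2 * g + 3) * ((n + g + 3)! * (n - g - 2)!) := by
  have h₁ := choose_mul_factorial_mul_factorial (show 2 * g + 3 ≤ n + g + 3 by omega)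
  have h₂ := choose_mul_factorial_mul_factorial (show 2 * g + 3 ≤ n + g + 1 by omega)
  rw [show n + g + 3 - (2 * g + 3) = n - g by omega] at h₁
  rw [show n + g + 1 - (2 * g + 3) = n - g - 2 by omega] at h₂
  apply Nat.eq_of_mul_eq_mul_left (factorial_pos (2 * g + 3))
  calc (2 * g + 3)! * ((n + g + 3).choose (2 * g + 3) * ((n + g + 1)! * (n - g)!))
      = (n + g + 3).choose (2 * g + 3) * (2 * g + 3)! * (n - g)! * (n + g + 1)! := by ring
    _ = (n + g + 1).choose (2 * g + 3) * (2 * g + 3)! * (n - g - 2)! * (n + g + 3)! := by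
      rw [h₁, h₂, mul_comm]
    _ = _ := by ring

theorem sigmaNG_add_two_left_mul_factorial : ∀ {n g : ℕ}, g ≤ n →
    sigmaNG (n + 2) g * n ! * (n + 1)! = sigmaNG n g * (n + g + 1)! * (n - g)!
  | n, 0, _ => by simp [sigmaNG, mul_comm]
  | n, 1, h => by
    have hn : n * (n - 1)! = n ! := mul_factorial_pred (by omega)
    simp only [sigmaNG, Nat.not_even_one, if_false]
    norm_num [factorial_succ, ← hn]
    ring
  | n, g + 2, h => by
    rw [sigmaNG_add_two, sigmaNG_add_two, show n + 2 + g + 1 = n + g + 3 by ring,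
      show n + (g + 2) + 1 = n + g + 3 by ring, show n - (g + 2) = n - g - 2 by omega]
    calc sigmaNG (n + 2) g * (n + g + 3).choose (2 * g + 3) * n ! * (n + 1)!
        = (n + g + 3).choose (2 * g + 3) * (sigmaNG (n + 2) g * n ! * (n + 1)!) := by ring
      _ = sigmaNG n g * ((n + g + 3).choose (2 * g + 3) * ((n + g + 1)! * (n - g)!)) := by
        rw [sigmaNG_add_two_left_mul_factorial (by omega)]; ring
      _ = _ := by rw [choose_mul_factorial_mul_factorial_add_two h]; ring

theorem prod_two_mul_add_sub_one_succ (g m : ℕ) :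
    (∏ k ∈ Icc 1 g, (2 * ((m + 1 : ℕ) : ℚ) + 2 * k - 1)) * (2 * m + 1) =
      (∏ k ∈ Icc 1 g, (2 * (m : ℚ) + 2 * k - 1)) * (2 * m + 2 * g + 1) := by
  induction g with
  | zero => simp
  | succ g ih =>
    rw [prod_Icc_succ_top (by omega), prod_Icc_succ_top (by omega)]
    push_cast at ih ⊢
    linear_combination (2 * (m : ℚ) + 2 * g + 3) * ih

theorem hankelClosedForm_mul_sigmaNG (g m : ℕ) :
    hankelClosedForm g m * sigmaNG g g * ∏ k ∈ Icc 1 g, (2 * (m : ℚ) + 2 * k - 1) =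
      sigmaNG (g + 2 * m) g * ∏ k ∈ Icc 1 g, (2 * (k : ℚ) - 1) := by
  induction m with
  | zero => simp [hankelClosedForm_zero_right]
  | succ m ih =>
    have hσ : (sigmaNG (g + 2 * (m + 1)) g : ℚ) * (g + 2 * m)! * (g + 2 * m + 1)! =
        sigmaNG (g + 2 * m) g * (2 * g + 2 * m + 1)! * (2 * m)! := by
      have := sigmaNG_add_two_left_mul_factorial (Nat.le_add_right g (2 * m))
      rw [show g + 2 * m + 2 = g + 2 * (m + 1) by ring,
        show g + 2 * m + g + 1 = 2 * g + 2 * m + 1 by ring,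
        show g + 2 * m - g = 2 * m by omega] at this
      exact_mod_cast this
    have hprod := prod_two_mul_add_sub_one_succ g m
    rw [hankelClosedForm_succ_right, hankelSizeRatio]
    simp only [cast_factorial_succ] at hσ ⊢
    generalize ∏ k ∈ Icc 1 g, (2 * ((m + 1 : ℕ) : ℚ) + 2 * k - 1) = A' at hprod ⊢
    generalize ∏ k ∈ Icc 1 g, (2 * (m : ℚ) + 2 * k - 1) = A at hprod ih
    field_simp
    push_cast at hσ ⊢
    linear_combination (hankelClosedForm g m * (2 * g + 2 * m)! * (2 * m)! * sigmaNG g g) * hprod +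
      ((2 * g + 2 * m)! * (2 * m)! * (2 * m + 2 * g + 1)) * ih -
      (∏ k ∈ Icc 1 g, (2 * (k : ℚ) - 1)) * hσ

theorem b_zero_even_case_general
    (g n : ℕ) (hn : g ≤ n) (hpar : n % 2 = g % 2) :
    Matrix.det (Matrix.of fun i j : Fin ((n - g) / 2) =>
        (catalan (g + i + j) : ℚ))
      = ((sigmaNG n g : ℚ) / (sigmaNG g g : ℚ))
          * (∏ k ∈ Finset.Icc 1 g, (2 * (k : ℚ) - 1))
          / (∏ k ∈ Finset.Icc 1 g, ((n : ℚ) - (g : ℚ) + 2 * (k : ℚ) - 1)) := by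
  obtain ⟨m, rfl⟩ : ∃ m, n = g + 2 * m := ⟨(n - g) / 2, by omega⟩
  rw [show (g + 2 * m - g) / 2 = m by omega]
  have hdenom : ∏ k ∈ Icc 1 g, (((g + 2 * m : ℕ) : ℚ) - g + 2 * k - 1) =
      ∏ k ∈ Icc 1 g, (2 * (m : ℚ) + 2 * k - 1) :=
    prod_congr rfl fun k _ => by push_cast; ring
  have hσ : (sigmaNG g g : ℚ) ≠ 0 := by exact_mod_cast (sigmaNG_pos le_rfl).ne'
  have hprod : ∏ k ∈ Icc 1 g, (2 * (m : ℚ) + 2 * k - 1) ≠ 0 :=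
    prod_ne_zero_iff.mpr fun k hk => by
      have hk₁ : (1 : ℚ) ≤ k := mod_cast (mem_Icc.mp hk).1
      have hm : (0 : ℚ) ≤ m := m.cast_nonneg
      exact (by linarith : (0 : ℚ) < _).ne'
  change (catalanHankel g m).det = _
  rw [det_catalanHankel, hdenom, div_mul_eq_mul_div, div_div, eq_div_iff (mul_ne_zero hσ hprod),
    ← hankelClosedForm_mul_sigmaNG]
  ring

/-- For `n ≥ g ≥ 1` with `n ≡ g (mod 2)` and `m = (n−g)/2`, the Hankel
determinant `b₀(n) = det(c_{g+i+j−2})_{1 ≤ i,j ≤ m}` of Catalan numbers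
equals `(σ_{n,g}/σ_{g,g}) · (∏_{k=1}^g (2k−1)) / (∏_{k=1}^g (n−g+2k−1))`. -/
theorem b_zero_even_case
    (g n : ℕ) (hg : 1 ≤ g) (hn : g ≤ n) (hpar : n % 2 = g % 2) :
    Matrix.det (Matrix.of fun i j : Fin ((n - g) / 2) =>
        (catalan (g + i + j) : ℚ))
      = ((sigmaNG n g : ℚ) / (sigmaNG g g : ℚ))
          * (∏ k ∈ Finset.Icc 1 g, (2 * (k : ℚ) - 1))
          / (∏ k ∈ Finset.Icc 1 g, ((n : ℚ) - (g : ℚ) + 2 * (k : ℚ) - 1)) :=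
  b_zero_even_case_general g n hn hpar
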